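/- arXiv:2508.05303 — 2 statements merged into one kernel-verified Lean document; each statement's English description precedes it below -/
import Mathlib

section
/- Let δ be an N-dimensional Gaussian random vector with mean μ and strictly positive definite covariance Σ, and let M be a symmetric strictly positive definite N×N matrix and Δρ ∈ ℝ^N. Then E[exp(-(1/2)‖δ - Δρ‖²_{M⁻¹})] = sqrt(det S / det Σ) · exp(-C), where S⁻¹ = M⁻¹ + Σ⁻¹, α = S(M⁻¹Δρ + Σ⁻¹μ), and 2C = ‖Δρ‖²_{M⁻¹} + ‖μ‖²_{Σ⁻¹} - ‖α‖²_{S⁻¹}. In particular this expectation is finite. -/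
/-!
Completing the square turns the exponent of the integrand into
`-‖x - α‖²_{S⁻¹} / 2 - C`, so the integral is `exp (-C) / √((2π)ᴺ det Σ)` times the unnormalised
Gaussian integral with precision matrix `S⁻¹`. Writing `S⁻¹ = Bᵀ B`, the substitution `y = B x`
reduces that integral to a product of one-dimensional Gaussian integrals, giving
`√(2π)ᴺ / |det B| = √(2π)ᴺ √(det S)`.
-/

open MeasureTheory Real Matrix

/-- Quadratic form `xᵀ Q x` induced by a matrix `Q`. -/
def quadForm {N : ℕ} (Q : Matrix (Fin N) (Fin N) ℝ) (x : Fin N → ℝ) : ℝ :=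
  x ⬝ᵥ Q.mulVec x

/-- Density of the multivariate Gaussian `N(μ, Cov)` on `ℝ^N`. -/
noncomputable def gaussDensity {N : ℕ} (μ : Fin N → ℝ) (Cov : Matrix (Fin N) (Fin N) ℝ)
    (x : Fin N → ℝ) : ℝ :=
  (Real.sqrt ((2 * π) ^ N * Cov.det))⁻¹ * Real.exp (-(quadForm Cov⁻¹ (x - μ)) / 2)

section ChangeOfVariables

variable {E F : Type*} [NormedAddCommGroup E] [NormedSpace ℝ E] [FiniteDimensional ℝ E]
  [MeasurableSpace E] [BorelSpace E] [NormedAddCommGroup F] (μ : Measure E) [μ.IsAddHaarMeasure]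
  {L : E →ₗ[ℝ] E}

lemma LinearMap.measurableEmbedding_of_det_ne_zero (hL : LinearMap.det L ≠ 0) :
    MeasurableEmbedding L :=
  (LinearMap.equivOfDetNeZero L hL).toContinuousLinearEquiv.toHomeomorph.measurableEmbedding

lemma integrable_comp_linearMap_iff (hL : LinearMap.det L ≠ 0) {f : E → F} :
    Integrable (fun x ↦ f (L x)) μ ↔ Integrable f μ := by
  rw [← Function.comp_def, ← (LinearMap.measurableEmbedding_of_det_ne_zero hL).integrable_map_iff,
    Measure.map_linearMap_addHaar_eq_smul_addHaar μ hL]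
  exact integrable_smul_measure (by simpa using hL) ENNReal.ofReal_ne_top

lemma integral_comp_linearMap [NormedSpace ℝ F] (hL : LinearMap.det L ≠ 0) (f : E → F) :
    ∫ x, f (L x) ∂μ = |LinearMap.det L|⁻¹ • ∫ y, f y ∂μ := by
  rw [← (LinearMap.measurableEmbedding_of_det_ne_zero hL).integral_map,
    Measure.map_linearMap_addHaar_eq_smul_addHaar μ hL, integral_smul_measure, abs_inv,
    ENNReal.toReal_ofReal (by positivity)]

end ChangeOfVariables

section QuadForm

variable {N : ℕ}

lemma quadForm_add (A B : Matrix (Fin N) (Fin N) ℝ) (x : Fin N → ℝ) :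
    quadForm (A + B) x = quadForm A x + quadForm B x := by
  simp only [quadForm, add_mulVec, dotProduct_add]

lemma quadForm_sub {Q : Matrix (Fin N) (Fin N) ℝ} (hQ : Q.IsSymm) (x y : Fin N → ℝ) :
    quadForm Q (x - y) = quadForm Q x - 2 * (x ⬝ᵥ Q *ᵥ y) + quadForm Q y := by
  have hyx : y ⬝ᵥ Q *ᵥ x = x ⬝ᵥ Q *ᵥ y := by
    rw [dotProduct_mulVec, ← mulVec_transpose, hQ.eq, dotProduct_comm]
  simp only [quadForm, mulVec_sub, dotProduct_sub, sub_dotProduct, hyx]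
  ring

lemma quadForm_transpose_mul_self (B : Matrix (Fin N) (Fin N) ℝ) (x : Fin N → ℝ) :
    quadForm (Bᵀ * B) x = ∑ i, (B *ᵥ x) i ^ 2 := by
  rw [quadForm, ← mulVec_mulVec, dotProduct_mulVec, vecMul_transpose]
  simp only [dotProduct, sq]

lemma quadForm_sub_add_quadForm_sub {A B : Matrix (Fin N) (Fin N) ℝ} (hA : A.IsSymm)
    (hB : B.IsSymm) {a b α : Fin N → ℝ} (hα : (A + B) *ᵥ α = A *ᵥ a + B *ᵥ b) (x : Fin N → ℝ) :
    quadForm A (x - a) + quadForm B (x - b)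
      = quadForm (A + B) (x - α) + (quadForm A a + quadForm B b - quadForm (A + B) α) := by
  have hx : x ⬝ᵥ (A + B) *ᵥ α = x ⬝ᵥ A *ᵥ a + x ⬝ᵥ B *ᵥ b := by
    rw [hα, dotProduct_add]
  rw [quadForm_sub hA, quadForm_sub hB, quadForm_sub (hA.add hB), quadForm_add A B x, hx]
  ring

end QuadForm

section RealPosDef

variable {n : Type*} {A : Matrix n n ℝ}

lemma Matrix.PosDef.isSymm (hA : A.PosDef) : A.IsSymm := by
  simpa [Matrix.IsSymm, conjTranspose_eq_transpose_of_trivial] using hA.isHermitian.eq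

lemma Matrix.PosDef.exists_transpose_mul_self_eq [Fintype n] [DecidableEq n] (hA : A.PosDef) :
    ∃ B : Matrix n n ℝ, Bᵀ * B = A := by
  open scoped MatrixOrder in
  obtain ⟨B, hB⟩ := CStarAlgebra.nonneg_iff_eq_star_mul_self.mp hA.posSemidef.nonneg
  exact ⟨B, by simpa [star_eq_conjTranspose, conjTranspose_eq_transpose_of_trivial] using hB.symm⟩

end RealPosDef

section GaussianIntegral

variable {ι : Type*} [Fintype ι]

lemma exp_neg_sum_sq_div_two_eq_prod (x : ι → ℝ) :
    exp (-(∑ i, x i ^ 2) / 2) = ∏ i, exp (-(1 / 2) * x i ^ 2) := by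
  rw [← exp_sum, neg_div, Finset.sum_div, ← Finset.sum_neg_distrib]
  exact congrArg exp (Finset.sum_congr rfl fun i _ ↦ by ring)

lemma integrable_exp_neg_sum_sq_div_two :
    Integrable (fun x : ι → ℝ ↦ exp (-(∑ i, x i ^ 2) / 2)) := by
  simp_rw [exp_neg_sum_sq_div_two_eq_prod]
  exact Integrable.fintype_prod fun _ ↦ integrable_exp_neg_mul_sq (by norm_num)

lemma integral_exp_neg_sum_sq_div_two :
    ∫ x : ι → ℝ, exp (-(∑ i, x i ^ 2) / 2) = sqrt (2 * π) ^ Fintype.card ι := by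
  simp_rw [exp_neg_sum_sq_div_two_eq_prod]
  rw [volume_pi, integral_fintype_prod_eq_pow (fun y ↦ exp (-(1 / 2) * y ^ 2)),
    integral_gaussian]
  norm_num [div_div_eq_mul_div, mul_comm]

end GaussianIntegral

section QuadFormGaussianIntegral

variable {N : ℕ} {A : Matrix (Fin N) (Fin N) ℝ}

lemma integrable_exp_neg_quadForm_transpose_mul_self_div_two {B : Matrix (Fin N) (Fin N) ℝ}
    (hB : B.det ≠ 0) : Integrable (fun x : Fin N → ℝ ↦ exp (-quadForm (Bᵀ * B) x / 2)) := by
  have hL : LinearMap.det (toLin' B) ≠ 0 := by rwa [LinearMap.det_toLin']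
  simp_rw [quadForm_transpose_mul_self, ← toLin'_apply]
  exact (integrable_comp_linearMap_iff volume hL
    (f := fun y ↦ exp (-(∑ i, y i ^ 2) / 2))).mpr integrable_exp_neg_sum_sq_div_two

lemma integral_exp_neg_quadForm_transpose_mul_self_div_two {B : Matrix (Fin N) (Fin N) ℝ}
    (hB : B.det ≠ 0) :
    ∫ x : Fin N → ℝ, exp (-quadForm (Bᵀ * B) x / 2) = sqrt (2 * π) ^ N / |B.det| := by
  have hL : LinearMap.det (toLin' B) ≠ 0 := by rwa [LinearMap.det_toLin']
  simp_rw [quadForm_transpose_mul_self, ← toLin'_apply]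
  rw [integral_comp_linearMap volume hL
    (fun y ↦ exp (-(∑ i, y i ^ 2) / 2)), integral_exp_neg_sum_sq_div_two, Fintype.card_fin,
    LinearMap.det_toLin', smul_eq_mul, inv_mul_eq_div]

lemma integrable_exp_neg_quadForm_div_two (hA : A.PosDef) :
    Integrable (fun x : Fin N → ℝ ↦ exp (-quadForm A x / 2)) := by
  obtain ⟨B, rfl⟩ := hA.exists_transpose_mul_self_eq
  refine integrable_exp_neg_quadForm_transpose_mul_self_div_two fun hB ↦ hA.det_pos.ne' ?_
  rw [det_mul, det_transpose, hB, mul_zero]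

lemma integral_exp_neg_quadForm_div_two (hA : A.PosDef) :
    ∫ x : Fin N → ℝ, exp (-quadForm A x / 2) = sqrt (2 * π) ^ N / sqrt A.det := by
  obtain ⟨B, rfl⟩ := hA.exists_transpose_mul_self_eq
  have hdet : (Bᵀ * B).det = B.det ^ 2 := by rw [det_mul, det_transpose, sq]
  have hB : B.det ≠ 0 := fun hB ↦ hA.det_pos.ne' (by rw [hdet, hB, sq, mul_zero])
  rw [integral_exp_neg_quadForm_transpose_mul_self_div_two hB, hdet, sqrt_sq_eq_abs]

end QuadFormGaussianIntegral

lemma exp_neg_quadForm_mul_gaussDensity {N : ℕ} {A Cov : Matrix (Fin N) (Fin N) ℝ}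
    (hA : A.IsSymm) (hCov : Cov⁻¹.IsSymm) {a μ α : Fin N → ℝ}
    (hα : (A + Cov⁻¹) *ᵥ α = A *ᵥ a + Cov⁻¹ *ᵥ μ) (x : Fin N → ℝ) :
    exp (-quadForm A (x - a) / 2) * gaussDensity μ Cov x
      = (sqrt ((2 * π) ^ N * Cov.det))⁻¹
          * exp (-(quadForm A a + quadForm Cov⁻¹ μ - quadForm (A + Cov⁻¹) α) / 2)
          * exp (-quadForm (A + Cov⁻¹) (x - α) / 2) := by
  have hsq := quadForm_sub_add_quadForm_sub hA hCov hα x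
  rw [gaussDensity, mul_left_comm, ← exp_add, mul_assoc, ← exp_add]
  congr 2
  linarith

theorem stmt0 (N : ℕ) (μ Δρ : Fin N → ℝ) (Cov M : Matrix (Fin N) (Fin N) ℝ)
    (hCov : Cov.PosDef) (hM : M.PosDef) :
    ∀ S : Matrix (Fin N) (Fin N) ℝ, S = (M⁻¹ + Cov⁻¹)⁻¹ →
    ∀ α : Fin N → ℝ, α = S.mulVec (M⁻¹.mulVec Δρ + Cov⁻¹.mulVec μ) →
    ∀ C : ℝ, C = (quadForm M⁻¹ Δρ + quadForm Cov⁻¹ μ - quadForm S⁻¹ α) / 2 →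
    Integrable
      (fun x : Fin N → ℝ => Real.exp (-(quadForm M⁻¹ (x - Δρ)) / 2) * gaussDensity μ Cov x) ∧
    ∫ x : Fin N → ℝ, Real.exp (-(quadForm M⁻¹ (x - Δρ)) / 2) * gaussDensity μ Cov x
      = Real.sqrt (S.det / Cov.det) * Real.exp (-C) := by
  intro S hS α hα C hC
  set P := M⁻¹ + Cov⁻¹
  have hP : P.PosDef := hM.inv.add hCov.inv
  have hPunit : IsUnit P.det := hP.det_pos.ne'.isUnit
  have hSP : S⁻¹ = P := hS ▸ nonsing_inv_nonsing_inv P hPunit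
  have hPα : P *ᵥ α = M⁻¹ *ᵥ Δρ + Cov⁻¹ *ᵥ μ := by
    rw [hα, hS, mulVec_mulVec, mul_nonsing_inv P hPunit, one_mulVec]
  have hfactor : ∀ x, exp (-quadForm M⁻¹ (x - Δρ) / 2) * gaussDensity μ Cov x
      = (sqrt ((2 * π) ^ N * Cov.det))⁻¹ * exp (-C) * exp (-quadForm P (x - α) / 2) := by
    intro x
    rw [exp_neg_quadForm_mul_gaussDensity hM.inv.isSymm hCov.inv.isSymm hPα, hC, hSP, neg_div]
  simp_rw [hfactor]
  refine ⟨((integrable_exp_neg_quadForm_div_two hP).comp_sub_right α).const_mul _, ?_⟩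
  rw [integral_const_mul, integral_sub_right_eq_self (fun x ↦ exp (-quadForm P x / 2)),
    integral_exp_neg_quadForm_div_two hP]
  have hSdet : S.det = P.det⁻¹ := by rw [hS, det_nonsing_inv, Ring.inverse_eq_inv]
  have hCovpos : 0 < Cov.det := hCov.det_pos
  have hPpos : 0 < P.det := hP.det_pos
  have hpow : sqrt ((2 * π) ^ N) = sqrt (2 * π) ^ N := by
    rw [← sqrt_sq (by positivity : 0 ≤ sqrt (2 * π) ^ N), pow_right_comm,
      sq_sqrt (by positivity)]
  rw [hSdet, sqrt_mul (by positivity), hpow, sqrt_div (by positivity), sqrt_inv]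
  field_simp
end

section
/- Let A be a symmetric N×N real matrix with a nontrivial kernel and let γ ∈ ℝ^N have a nonzero component γ₀ in ker(A). Then ∫_{ℝ^N} exp(-(1/2)xᵀA x + γᵀx) dx = +∞. -/
open MeasureTheory Real Matrix ENNReal

theorem lintegral_eq_top_of_add_right_eq_mul {G : Type*} [AddGroup G] [MeasurableSpace G]
    [MeasurableAdd G] {μ : Measure G} [μ.IsAddRightInvariant] {f : G → ℝ≥0∞} {v : G}
    {c : ℝ≥0∞} (hc₁ : c ≠ 1) (hc : c ≠ ∞) (hf : ∀ x, f (x + v) = c * f x)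
    (h0 : ∫⁻ x, f x ∂μ ≠ 0) : ∫⁻ x, f x ∂μ = ∞ := by
  by_contra htop
  have hfix : c * ∫⁻ x, f x ∂μ = ∫⁻ x, f x ∂μ := by
    rw [← lintegral_const_mul' _ _ hc, ← lintegral_add_right_eq_self f v]
    simp only [hf]
  exact hc₁ ((ENNReal.mul_eq_right h0 htop).1 hfix)

section quadForm

variable {N : ℕ} {A : Matrix (Fin N) (Fin N) ℝ}

theorem dotProduct_mulVec_eq_zero_of_mulVec_eq_zero (hA : A.IsSymm) {v : Fin N → ℝ}
    (hv : A *ᵥ v = 0) (x : Fin N → ℝ) : v ⬝ᵥ A *ᵥ x = 0 := by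
  rw [dotProduct_mulVec, ← mulVec_transpose, hA.eq, hv, zero_dotProduct]

theorem quadForm_add_of_mulVec_eq_zero (hA : A.IsSymm) {v : Fin N → ℝ} (hv : A *ᵥ v = 0)
    (x : Fin N → ℝ) : quadForm A (x + v) = quadForm A x := by
  simp only [quadForm, mulVec_add, hv, add_zero, add_dotProduct,
    dotProduct_mulVec_eq_zero_of_mulVec_eq_zero hA hv]

end quadForm

/-- If the symmetric matrix `A` has a nontrivial kernel and the linear term `γ` has a
nonzero component `γ₀` in the kernel of `A` (its remaining component lying in the range
of `A`), then the Gaussian-type integral diverges. -/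
theorem stmt8 (N : ℕ) (A : Matrix (Fin N) (Fin N) ℝ) (hA : A.IsSymm)
    (γ γ₀ : Fin N → ℝ) (hker : A.mulVec γ₀ = 0) (hne : γ₀ ≠ 0)
    (hdecomp : ∃ y : Fin N → ℝ, γ = γ₀ + A.mulVec y) :
    ∫⁻ x : Fin N → ℝ, ENNReal.ofReal (Real.exp (-(quadForm A x) / 2 + γ ⬝ᵥ x)) = ⊤ := by
  obtain ⟨y, rfl⟩ := hdecomp
  have hγγ₀ : (γ₀ + A *ᵥ y) ⬝ᵥ γ₀ = γ₀ ⬝ᵥ γ₀ := by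
    rw [add_dotProduct, dotProduct_comm (A *ᵥ y),
      dotProduct_mulVec_eq_zero_of_mulVec_eq_zero hA hker, add_zero]
  have hpos : 0 < γ₀ ⬝ᵥ γ₀ := by simpa using dotProduct_self_star_pos_iff.2 hne
  refine lintegral_eq_top_of_add_right_eq_mul (v := γ₀) (c := ENNReal.ofReal (exp (γ₀ ⬝ᵥ γ₀)))
    ?_ ofReal_ne_top (fun x => ?_) ?_
  · exact (one_lt_ofReal.2 (one_lt_exp_iff.2 hpos)).ne'
  · rw [quadForm_add_of_mulVec_eq_zero hA hker, dotProduct_add, hγγ₀, ← ofReal_mul (exp_pos _).le,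
      ← exp_add]
    ring_nf
  · refine (lintegral_pos_iff_support ?_).2 ?_ |>.ne'
    · unfold quadForm; fun_prop
    · simp [Function.support, exp_pos, NeZero.ne]
end
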